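/- arXiv:2006.01295 — 2 statements merged into one kernel-verified Lean document; each statement's English description precedes it below -/
import Mathlib

section
/- Let δ : [1,∞) → ℂ be locally integrable. Then for every real x ≥ 1, ∫₁ˣ m(x/t) (Σ_{k≤t} δ(t/k)) (dt/t²) = ∫₁ˣ δ(u) (du/u²), where m(u) = Σ_{n≤u} μ(n)/n. -/
/-!
Write `m (x / t) = ∑_{n ≤ x} μ(n)/n · 𝟙[t ≤ x/n]` and `∑_{k ≤ t} δ(t/k) = ∑_{k ≤ x} 𝟙[k ≤ t] δ(t/k)`
for `1 ≤ t ≤ x`, so that the left side is a finite sum of integrals. The substitution `t = k u`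
turns the `(n, k)` term into `μ(n) F(x/(nk)) / (nk)`, where `F y = ∫₁ʸ δ(u) du/u²`. Grouped by
`m = nk`, the terms carry the coefficient `∑_{n ∣ m} μ(n)`, which vanishes unless `m = 1`; the
surviving term is `F x`.
-/

open Finset MeasureTheory ArithmeticFunction Real

noncomputable def Mf (x : ℝ) : ℝ := ∑ n ∈ Finset.Icc 1 ⌊x⌋₊, (moebius n : ℝ)

noncomputable def mf (x : ℝ) : ℝ := ∑ n ∈ Finset.Icc 1 ⌊x⌋₊, (moebius n : ℝ) / n

theorem Nat.sum_Icc_div_mul_eq_sum_filter_dvd {M : Type*} [AddCommMonoid M] (f : ℕ → M)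
    {n : ℕ} (hn : 0 < n) (N : ℕ) :
    ∑ k ∈ Icc 1 (N / n), f (n * k) = ∑ m ∈ (Icc 1 N).filter (n ∣ ·), f m := by
  refine Finset.sum_nbij' (n * ·) (· / n) (fun k hk => ?_) (fun m hm => ?_)
    (fun k _ => Nat.mul_div_cancel_left k hn) (fun m hm => ?_) (fun _ _ => rfl)
  · simp only [mem_Icc, mem_filter, Nat.le_div_iff_mul_le hn] at hk ⊢
    exact ⟨⟨Nat.mul_pos hn hk.1, by linarith⟩, dvd_mul_right n k⟩
  · simp only [mem_Icc, mem_filter] at hm ⊢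
    obtain ⟨⟨hm1, hmN⟩, k, rfl⟩ := hm
    rw [Nat.mul_div_cancel_left k hn]
    exact ⟨Nat.pos_of_mul_pos_left hm1, (Nat.le_div_iff_mul_le hn).mpr (by linarith)⟩
  · simp only [mem_filter] at hm
    exact Nat.mul_div_cancel' hm.2

theorem sum_moebius_smul_sum_Icc_div {M : Type*} [AddCommGroup M] (f : ℕ → M) {N : ℕ}
    (hN : 1 ≤ N) :
    ∑ n ∈ Icc 1 N, moebius n • ∑ k ∈ Icc 1 (N / n), f (n * k) = f 1 := by
  calc ∑ n ∈ Icc 1 N, moebius n • ∑ k ∈ Icc 1 (N / n), f (n * k)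
      = ∑ n ∈ Icc 1 N, ∑ m ∈ (Icc 1 N).filter (n ∣ ·), moebius n • f m := by
        refine sum_congr rfl fun n hn => ?_
        rw [Nat.sum_Icc_div_mul_eq_sum_filter_dvd f (mem_Icc.mp hn).1, smul_sum]
    _ = ∑ m ∈ Icc 1 N, (∑ n ∈ m.divisors, moebius n) • f m := by
        simp_rw [sum_smul]
        refine sum_comm' fun n m => ?_
        simp only [mem_Icc, mem_filter, Nat.mem_divisors]
        constructor
        · rintro ⟨-, ⟨hm1, hmN⟩, hnm⟩
          exact ⟨⟨hnm, by omega⟩, hm1, hmN⟩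
        · rintro ⟨⟨hnm, -⟩, hm1, hmN⟩
          exact ⟨⟨Nat.pos_of_dvd_of_pos hnm hm1, (Nat.le_of_dvd hm1 hnm).trans hmN⟩,
            ⟨hm1, hmN⟩, hnm⟩
    _ = f 1 := by
        rw [sum_eq_single_of_mem 1 (mem_Icc.mpr ⟨le_rfl, hN⟩)]
        · simp
        · intro m _ hm1
          rw [← coe_mul_zeta_apply, moebius_mul_coe_zeta, one_apply_ne hm1, zero_smul]

theorem Nat.Icc_one_floor_eq_filter {t : ℝ} (ht : 0 ≤ t) {N : ℕ} (hN : ⌊t⌋₊ ≤ N) :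
    Icc 1 ⌊t⌋₊ = (Icc 1 N).filter (fun n : ℕ => (n : ℝ) ≤ t) := by
  ext n
  simp only [mem_Icc, mem_filter, Nat.le_floor_iff ht]
  constructor
  · rintro ⟨hn1, hnt⟩
    exact ⟨⟨hn1, (Nat.le_floor hnt).trans hN⟩, hnt⟩
  · rintro ⟨⟨hn1, -⟩, hnt⟩
    exact ⟨hn1, hnt⟩

theorem Nat.cast_mem_Icc_of_mem_Icc_one_floor {n : ℕ} {y : ℝ} (hn : n ∈ Icc 1 ⌊y⌋₊) :
    (n : ℝ) ∈ Set.Icc 1 y := by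
  obtain ⟨hn1, hny⟩ := mem_Icc.mp hn
  exact ⟨by exact_mod_cast hn1, (Nat.le_floor_iff' (by omega)).mp hny⟩

theorem div_mem_Icc_one_of_mem_Icc {a y : ℝ} (ha : a ∈ Set.Icc 1 y) : y / a ∈ Set.Icc 1 y :=
  ⟨(one_le_div₀ (by linarith [ha.1])).mpr ha.2, div_le_self (by linarith [ha.1, ha.2]) ha.1⟩

theorem intervalIntegral.integral_indicator_Ici {E : Type*} [NormedAddCommGroup E]
    [NormedSpace ℝ E] {f : ℝ → E} {a b c : ℝ} (hc : c ∈ Set.Icc a b) :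
    ∫ x in a..b, (Set.Ici c).indicator f x = ∫ x in c..b, f x := by
  rw [integral_congr_ae_restrict (ae_restrict_of_ae
      (indicator_ae_eq_of_ae_eq_set Ioi_ae_eq_Ici.symm)),
    integral_of_le (hc.1.trans hc.2), integral_of_le hc.2,
    MeasureTheory.integral_indicator measurableSet_Ioi, Measure.restrict_restrict measurableSet_Ioi,
    Set.inter_comm, Set.Ioc_inter_Ioi, max_eq_right hc.1]

theorem IntervalIntegrable.indicator_Ici {E : Type*} [NormedAddCommGroup E] {f : ℝ → E}
    {a b c : ℝ} (hc : c ∈ Set.Icc a b) (hf : IntervalIntegrable f volume c b) :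
    IntervalIntegrable ((Set.Ici c).indicator f) volume a b := by
  rw [intervalIntegrable_iff_integrableOn_Icc_of_le hc.2] at hf
  rw [intervalIntegrable_iff_integrableOn_Icc_of_le (hc.1.trans hc.2), IntegrableOn,
    integrable_indicator_iff measurableSet_Ici, IntegrableOn,
    Measure.restrict_restrict measurableSet_Ici]
  exact hf.mono_set fun x hx => ⟨hx.1, hx.2.2⟩

theorem intervalIntegral.integral_comp_div_div_sq (g : ℝ → ℂ) {c : ℝ} (hc : c ≠ 0) (a b : ℝ) :
    ∫ t in a..b, g (t / c) / (t : ℂ) ^ 2 = (c : ℂ)⁻¹ * ∫ u in a / c..b / c, g u / (u : ℂ) ^ 2 := by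
  have hc' : (c : ℂ) ≠ 0 := Complex.ofReal_ne_zero.mpr hc
  have h := integral_comp_div (fun u => g u / ((c * u : ℝ) : ℂ) ^ 2) (a := a) (b := b) hc
  simp only [mul_div_cancel₀ _ hc] at h
  rw [h, Complex.real_smul]
  push_cast
  simp_rw [mul_pow, div_mul_eq_div_div_swap, div_eq_mul_inv _ ((c : ℂ) ^ 2)]
  rw [integral_mul_const]
  field_simp

theorem IntervalIntegrable.comp_div_div_sq {g : ℝ → ℂ} {a b c : ℝ} (hc : 0 < c) (ha : 0 < a)
    (hb : 0 < b) (hg : IntervalIntegrable g volume (a / c) (b / c)) :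
    IntervalIntegrable (fun t => g (t / c) / (t : ℂ) ^ 2) volume a b := by
  have hgc : IntervalIntegrable (fun t => g (t / c)) volume a b := by
    simpa [div_eq_mul_inv, hc.ne'] using hg.comp_mul_right (c := c⁻¹)
  have hsq : ContinuousOn (fun t : ℝ => ((t : ℂ) ^ 2)⁻¹) (Set.uIcc a b) := by
    refine ((Complex.continuous_ofReal.pow 2).continuousOn).inv₀ fun t ht => ?_
    have : 0 < t := (lt_min ha hb).trans_le ht.1
    exact pow_ne_zero _ (Complex.ofReal_ne_zero.mpr this.ne')
  simpa only [div_eq_mul_inv] using hgc.mul_continuousOn hsq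

theorem eqOn_sum_Icc_floor_comp_div_div_sq_sum_indicator (δ : ℝ → ℂ) {y : ℝ} (hy : 1 ≤ y) :
    Set.EqOn (fun t => (∑ k ∈ Icc 1 ⌊t⌋₊, δ (t / k)) / (t : ℂ) ^ 2)
      (fun t => ∑ k ∈ Icc 1 ⌊y⌋₊,
        (Set.Ici (k : ℝ)).indicator (fun s => δ (s / k) / (s : ℂ) ^ 2) t) (Set.uIcc 1 y) := by
  intro t ht
  rw [Set.uIcc_of_le hy] at ht
  dsimp only
  rw [Nat.Icc_one_floor_eq_filter (by linarith [ht.1]) (Nat.floor_le_floor ht.2), sum_filter,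
    sum_div]
  simp only [Set.indicator_apply, Set.mem_Ici, ite_div, zero_div]

theorem intervalIntegrable_indicator_Ici_comp_div_div_sq {δ : ℝ → ℂ} {y : ℝ}
    (hδ : IntervalIntegrable δ volume 1 y) {k : ℕ} (hk : k ∈ Icc 1 ⌊y⌋₊) :
    IntervalIntegrable ((Set.Ici (k : ℝ)).indicator fun s => δ (s / k) / (s : ℂ) ^ 2)
      volume 1 y := by
  have hk := Nat.cast_mem_Icc_of_mem_Icc_one_floor hk
  have hyk := div_mem_Icc_one_of_mem_Icc hk
  refine .indicator_Ici hk (.comp_div_div_sq (by linarith [hk.1]) (by linarith [hk.1])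
    (by linarith [hk.1, hk.2]) ?_)
  rw [div_self (by linarith [hk.1])]
  exact hδ.mono_set (Set.uIcc_subset_uIcc Set.left_mem_uIcc (Set.mem_uIcc_of_le hyk.1 hyk.2))

theorem intervalIntegrable_sum_Icc_floor_comp_div_div_sq {δ : ℝ → ℂ} {y : ℝ} (hy : 1 ≤ y)
    (hδ : IntervalIntegrable δ volume 1 y) :
    IntervalIntegrable (fun t => (∑ k ∈ Icc 1 ⌊t⌋₊, δ (t / k)) / (t : ℂ) ^ 2) volume 1 y :=
  (intervalIntegrable_congr
      ((eqOn_sum_Icc_floor_comp_div_div_sq_sum_indicator δ hy).mono Set.uIoc_subset_uIcc)).mpr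
    (by simpa only [Finset.sum_fn] using IntervalIntegrable.sum _ fun _ hk =>
      intervalIntegrable_indicator_Ici_comp_div_div_sq hδ hk)

theorem integral_sum_Icc_floor_comp_div_div_sq {δ : ℝ → ℂ} {y : ℝ} (hy : 1 ≤ y)
    (hδ : IntervalIntegrable δ volume 1 y) :
    ∫ t in (1 : ℝ)..y, (∑ k ∈ Icc 1 ⌊t⌋₊, δ (t / k)) / (t : ℂ) ^ 2
      = ∑ k ∈ Icc 1 ⌊y⌋₊, (k : ℂ)⁻¹ * ∫ u in (1 : ℝ)..y / k, δ u / (u : ℂ) ^ 2 := by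
  rw [intervalIntegral.integral_congr (eqOn_sum_Icc_floor_comp_div_div_sq_sum_indicator δ hy),
    intervalIntegral.integral_finsetSum fun k hk =>
      intervalIntegrable_indicator_Ici_comp_div_div_sq hδ hk]
  refine sum_congr rfl fun k hk => ?_
  have hk := Nat.cast_mem_Icc_of_mem_Icc_one_floor hk
  rw [intervalIntegral.integral_indicator_Ici hk,
    intervalIntegral.integral_comp_div_div_sq _ (by linarith [hk.1]), div_self (by linarith [hk.1]),
    Complex.ofReal_natCast]

theorem integral_sum_Icc_floor_div_smul {E : Type*} [NormedAddCommGroup E] [NormedSpace ℝ E]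
    (c : ℕ → ℝ) {g : ℝ → E} {x : ℝ} (hx : 1 ≤ x) (hg : IntervalIntegrable g volume 1 x) :
    ∫ t in (1 : ℝ)..x, (∑ n ∈ Icc 1 ⌊x / t⌋₊, c n) • g t
      = ∑ n ∈ Icc 1 ⌊x⌋₊, c n • ∫ t in (1 : ℝ)..x / n, g t := by
  have hEq : Set.EqOn (fun t => (∑ n ∈ Icc 1 ⌊x / t⌋₊, c n) • g t)
      (fun t => ∑ n ∈ Icc 1 ⌊x⌋₊, c n • {s | s ≤ x / n}.indicator g t) (Set.uIcc 1 x) := by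
    intro t ht
    rw [Set.uIcc_of_le hx] at ht
    have ht0 : 0 < t := by linarith [ht.1]
    dsimp only
    rw [Nat.Icc_one_floor_eq_filter (div_nonneg (by linarith) ht0.le)
        (Nat.floor_le_floor (div_le_self (by linarith) ht.1)), sum_filter, sum_smul]
    refine sum_congr rfl fun n hn => ?_
    have hn0 : (0 : ℝ) < n := by exact_mod_cast (mem_Icc.mp hn).1
    simp only [Set.indicator_apply, Set.mem_ofPred_eq, le_div_iff₀ ht0, le_div_iff₀ hn0,
      mul_comm (n : ℝ), ite_smul, smul_ite, zero_smul, smul_zero]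
  have hInt : ∀ n : ℕ, IntervalIntegrable ({s | s ≤ x / n}.indicator g) volume 1 x := fun n =>
    intervalIntegrable_iff.mpr ((intervalIntegrable_iff.mp hg).indicator measurableSet_Iic)
  rw [intervalIntegral.integral_congr hEq, intervalIntegral.integral_finsetSum fun n _ => by
      simpa only [Pi.smul_def] using (hInt n).smul (c n)]
  refine sum_congr rfl fun n hn => ?_
  rw [intervalIntegral.integral_smul, intervalIntegral.integral_indicator
    (div_mem_Icc_one_of_mem_Icc (Nat.cast_mem_Icc_of_mem_Icc_one_floor hn))]

theorem stmt_5 (δ : ℝ → ℂ) (hδ : LocallyIntegrableOn δ (Set.Ici 1))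
    (x : ℝ) (hx : 1 ≤ x) :
    ∫ t in (1:ℝ)..x, (mf (x / t) : ℂ) * (∑ k ∈ Finset.Icc 1 ⌊t⌋₊, δ (t / k)) / t ^ 2
      = ∫ u in (1:ℝ)..x, δ u / u ^ 2 := by
  set F : ℝ → ℂ := fun y => ∫ u in (1:ℝ)..y, δ u / u ^ 2
  have hδx : IntervalIntegrable δ volume 1 x :=
    (intervalIntegrable_iff_integrableOn_Icc_of_le hx).mpr
      (hδ.integrableOn_compact_subset Set.Icc_subset_Ici_self isCompact_Icc)
  calc ∫ t in (1:ℝ)..x, (mf (x / t) : ℂ) * (∑ k ∈ Icc 1 ⌊t⌋₊, δ (t / k)) / t ^ 2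
      = ∫ t in (1:ℝ)..x, mf (x / t) • ((∑ k ∈ Icc 1 ⌊t⌋₊, δ (t / k)) / (t : ℂ) ^ 2) := by
        simp only [Complex.real_smul, mul_div_assoc]
    _ = ∑ n ∈ Icc 1 ⌊x⌋₊, ((moebius n : ℝ) / n) •
          ∫ t in (1:ℝ)..x / n, (∑ k ∈ Icc 1 ⌊t⌋₊, δ (t / k)) / (t : ℂ) ^ 2 :=
        integral_sum_Icc_floor_div_smul _ hx
          (intervalIntegrable_sum_Icc_floor_comp_div_div_sq hx hδx)
    _ = ∑ n ∈ Icc 1 ⌊x⌋₊, moebius n •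
          ∑ k ∈ Icc 1 (⌊x⌋₊ / n), ((n * k : ℕ) : ℂ)⁻¹ * F (x / (n * k : ℕ)) := by
        refine sum_congr rfl fun n hn => ?_
        have hxn := div_mem_Icc_one_of_mem_Icc (Nat.cast_mem_Icc_of_mem_Icc_one_floor hn)
        rw [integral_sum_Icc_floor_comp_div_div_sq hxn.1
            (hδx.mono_set (Set.uIcc_subset_uIcc_left (Set.mem_uIcc_of_le hxn.1 hxn.2))),
          Nat.floor_div_natCast, smul_sum, smul_sum]
        refine sum_congr rfl fun k _ => ?_
        simp only [F, Complex.real_smul, zsmul_eq_mul, div_div]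
        push_cast
        ring
    _ = F x := by
        simpa using sum_moebius_smul_sum_Icc_div (fun m : ℕ => (m : ℂ)⁻¹ * F (x / m))
          (Nat.le_floor (by exact_mod_cast hx))
end

section
/- Let g : [0,1] → ℂ be integrable with ∫₀¹ g(y) dy = 1, and define G(t) = 1 − (1/t) Σ_{n≤t} g(n/t). Then for every real x ≥ 1, m(x) − M(x)/x = ∫₁ˣ (M(x/t)·t/x) G(t) (dt/t) + (1/x) ∫_{1/x}^1 (g(y)/y) dy. -/
open Finset MeasureTheory ArithmeticFunction Real

/-!
For `1 ≤ t ≤ x` we have `M(x/t) = ∑_{m ≤ x} μ(m) 1[t ≤ x/m]` and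
`∑_{n ≤ t} g(n/t) = ∑_{n ≤ x} 1[n ≤ t] g(n/t)`, so the integrand is a finite combination of
indicator functions of intervals. Integrating, `∫₁ˣ M(x/t) dt = ∑ μ(m) (x/m - 1) = x m(x) - M(x)`,
while the substitution `u = n/t` turns the `(m, n)` term of `∫₁ˣ M(x/t) ∑_{n ≤ t} g(n/t) dt/t`
into `μ(m) ∫_{mn/x}^1 g(u) du/u` when `mn ≤ x`. Grouping by `k = mn`, the identity
`∑_{d ∣ k} μ(d) = [k = 1]` leaves only `∫_{1/x}^1 g(u) du/u`.
-/

open scoped ArithmeticFunction.Moebius ArithmeticFunction.zeta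

theorem sum_Icc_floor_eq_sum_ite {M : Type*} [AddCommMonoid M] (f : ℕ → M) {y x : ℝ}
    (hyx : y ≤ x) :
    ∑ n ∈ Icc 1 ⌊y⌋₊, f n = ∑ n ∈ Icc 1 ⌊x⌋₊, if (n : ℝ) ≤ y then f n else 0 := by
  rw [← sum_filter]
  congr 1
  ext n
  simp only [mem_Icc, mem_filter]
  constructor
  · rintro ⟨hn, hny⟩
    exact ⟨⟨hn, hny.trans (Nat.floor_mono hyx)⟩, (Nat.le_floor_iff' (by omega)).1 hny⟩
  · rintro ⟨⟨hn, -⟩, hny⟩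
    exact ⟨hn, (Nat.le_floor_iff' (by omega)).2 hny⟩

theorem sum_sum_ite_moebius_mul_eq_apply_one {R : Type*} [Ring R] (c : ℕ → R) {N : ℕ} (hN : 1 ≤ N) :
    ∑ m ∈ Icc 1 N, ∑ n ∈ Icc 1 N, (if m * n ≤ N then (μ m : R) * c (m * n) else 0) = c 1 := by
  have hIcc : Icc 1 N = Ioc 0 N := by rw [← Icc_add_one_left_eq_Ioc, zero_add]
  calc ∑ m ∈ Icc 1 N, ∑ n ∈ Icc 1 N, (if m * n ≤ N then (μ m : R) * c (m * n) else 0)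
      = ∑ p ∈ Icc 1 N ×ˢ Icc 1 N with p.1 * p.2 ≤ N, (μ p.1 : R) * c (p.1 * p.2) := by
        rw [sum_filter, sum_product]
    _ = ∑ k ∈ Icc 1 N, ∑ p ∈ k.divisorsAntidiagonal, (μ p.1 : R) * c k := by
        rw [← sum_fiberwise_of_maps_to (g := fun p => p.1 * p.2) (t := Icc 1 N) fun p hp => ?_]
        · refine sum_congr rfl fun k hk => ?_
          have hk0 : k ≠ 0 := Nat.one_le_iff_ne_zero.1 (mem_Icc.1 hk).1
          have hkN : k ≤ N := (mem_Icc.1 hk).2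
          rw [filter_filter, hIcc, Nat.divisorsAntidiagonal_eq_prod_filter_of_le hk0 hkN]
          refine sum_congr (filter_congr fun p _ => ?_) fun p hp => by rw [(mem_filter.1 hp).2]
          exact ⟨fun h => h.2, fun h => ⟨h ▸ hkN, h⟩⟩
        · simp only [mem_filter, mem_product, mem_Icc] at hp ⊢
          have := Nat.mul_le_mul hp.1.1.1 hp.1.2.1
          omega
    _ = ∑ k ∈ Icc 1 N, (μ * ζ : ArithmeticFunction R) k * c k := by
        refine sum_congr rfl fun k _ => ?_
        rw [coe_mul_zeta_apply, sum_mul, Nat.sum_divisorsAntidiagonal (fun d _ => (μ d : R) * c k)]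
        simp only [intCoe_apply]
    _ = c 1 := by
        simp [coe_moebius_mul_coe_zeta, one_apply, hN]

theorem intervalIntegral.integral_indicator_Icc {E : Type*} [NormedAddCommGroup E]
    [NormedSpace ℝ E] (f : ℝ → E) {a b c d : ℝ} (hac : a ≤ c) (hcd : c ≤ d) (hdb : d ≤ b) :
    ∫ t in a..b, (Set.Icc c d).indicator f t = ∫ t in c..d, f t := by
  rw [integral_of_le (hac.trans (hcd.trans hdb)), integral_of_le hcd,
    setIntegral_indicator measurableSet_Icc]
  rcases hac.lt_or_eq with hac | rfl
  · rw [Set.inter_eq_right.2 (Set.Icc_subset_Ioc hac hdb), integral_Icc_eq_integral_Ioc]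
  · rw [show Set.Ioc a b ∩ Set.Icc a d = Set.Ioc a d from ?_]
    ext t
    simp only [Set.mem_inter_iff, Set.mem_Ioc, Set.mem_Icc]
    constructor
    · rintro ⟨⟨hat, -⟩, -, htd⟩
      exact ⟨hat, htd⟩
    · rintro ⟨hat, htd⟩
      exact ⟨⟨hat, htd.trans hdb⟩, hat.le, htd⟩

section ReciprocalSubstitution

variable (f : ℝ → ℂ) {n a b : ℝ}

theorem hasDerivAt_const_div {t : ℝ} (ht : t ≠ 0) :
    HasDerivAt (fun t => n / t) (-(n / t ^ 2)) t := by
  simpa [div_eq_mul_inv] using (hasDerivAt_inv ht).const_mul n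

-- The Jacobian of `u = n / t`: `dt / t = -du / u`.
theorem neg_div_sq_smul_comp_div (hn : n ≠ 0) (t : ℝ) :
    (-(n / t ^ 2)) • (fun u : ℝ => f u / u) (n / t) = -(f (n / t) / t) := by
  simp only [Complex.real_smul]
  push_cast
  field_simp
  rw [mul_div_mul_left _ _ (by exact_mod_cast hn)]

theorem integral_Icc_comp_div_div_self (hn : 0 < n) (ha : 0 < a) (hab : a ≤ b) :
    ∫ t in Set.Icc a b, f (n / t) / t = ∫ u in Set.Icc (n / b) (n / a), f u / u := by
  have hpos : ∀ t ∈ Set.Icc a b, t ≠ 0 := fun t ht => (ha.trans_le ht.1).ne'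
  have hsubst := integral_Icc_deriv_smul_of_deriv_nonpos (f := fun t => n / t)
    (g := fun u : ℝ => f u / u)
    (continuousOn_const.div continuousOn_id hpos)
    (fun t ht => hasDerivAt_const_div (hpos t (Set.Ioo_subset_Icc_self ht)))
    (fun t _ => by simp only [neg_nonpos]; positivity) hab
  rw [← neg_inj, ← hsubst, ← integral_neg]
  refine setIntegral_congr_fun measurableSet_Icc fun t ht => ?_
  rw [neg_div_sq_smul_comp_div f hn.ne' t]

theorem integrableOn_Icc_comp_div_div_self_iff (hn : 0 < n) (ha : 0 < a) (hab : a ≤ b) :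
    IntegrableOn (fun t => f (n / t) / t) (Set.Icc a b) ↔
      IntegrableOn (fun u => f u / u) (Set.Icc (n / b) (n / a)) := by
  have hpos : ∀ t ∈ Set.Icc a b, t ≠ 0 := fun t ht => (ha.trans_le ht.1).ne'
  rw [← integrableOn_Icc_deriv_smul_iff_of_deriv_nonpos (f := fun t => n / t)
    (continuousOn_const.div continuousOn_id hpos)
    (fun t ht => hasDerivAt_const_div (hpos t (Set.Ioo_subset_Icc_self ht)))
    (fun t _ => by simp only [neg_nonpos]; positivity) hab]
  simp only [neg_div_sq_smul_comp_div f hn.ne']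
  exact integrable_neg_iff.symm

theorem intervalIntegral.integral_comp_div_div_self (hn : 0 < n) (ha : 0 < a) (hab : a ≤ b) :
    ∫ t in a..b, f (n / t) / t = ∫ u in n / b..n / a, f u / u := by
  rw [integral_of_le hab, integral_of_le (div_le_div_of_nonneg_left hn.le ha hab),
    ← integral_Icc_eq_integral_Ioc, ← integral_Icc_eq_integral_Ioc,
    integral_Icc_comp_div_div_self f hn ha hab]

end ReciprocalSubstitution

theorem IntegrableOn.div_ofReal_Icc {f : ℝ → ℂ} {a b : ℝ} (hf : IntegrableOn f (Set.Icc a b))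
    (ha : 0 < a) : IntegrableOn (fun u => f u / u) (Set.Icc a b) := by
  have hinv : ContinuousOn (fun u : ℝ => (u : ℂ)⁻¹) (Set.Icc a b) :=
    (Complex.continuous_ofReal.continuousOn).inv₀ fun u hu => by
      exact_mod_cast (ha.trans_le hu.1).ne'
  simpa only [div_eq_mul_inv] using hf.mul_continuousOn hinv isCompact_Icc

theorem IntegrableOn.intervalIntegrable_indicator_Icc {E : Type*} [NormedAddCommGroup E]
    {f : ℝ → E} {a b c d : ℝ} (hf : IntegrableOn f (Set.Icc c d)) :
    IntervalIntegrable ((Set.Icc c d).indicator f) volume a b :=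
  (hf.integrable_indicator measurableSet_Icc).intervalIntegrable

section MoebiusIntegral

variable (g : ℝ → ℂ) {x : ℝ}

theorem Mf_div_eq_sum_indicator (hx : 0 ≤ x) {t : ℝ} (ht : 1 ≤ t) :
    Mf (x / t) = ∑ m ∈ Icc 1 ⌊x⌋₊, (Set.Icc 1 (x / m)).indicator (fun _ => (μ m : ℝ)) t := by
  rw [Mf, sum_Icc_floor_eq_sum_ite _ (div_le_self hx ht)]
  refine sum_congr rfl fun m hm => ?_
  have hm0 : (0 : ℝ) < m := by exact_mod_cast (mem_Icc.1 hm).1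
  simp only [Set.indicator_apply, Set.mem_Icc, ht, true_and,
    le_div_comm₀ hm0 (zero_lt_one.trans_le ht)]

theorem intervalIntegrable_Mf_div (hx : 1 ≤ x) :
    IntervalIntegrable (fun t => Mf (x / t)) volume 1 x := by
  have hsum : IntervalIntegrable
      (∑ m ∈ Icc 1 ⌊x⌋₊, (Set.Icc 1 (x / m)).indicator (fun _ => (μ m : ℝ))) volume 1 x :=
    .sum _ fun m _ => IntegrableOn.intervalIntegrable_indicator_Icc
        (integrableOn_const measure_Icc_lt_top.ne)
  refine hsum.congr fun t ht => ?_
  rw [Set.uIoc_of_le hx] at ht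
  simp only [Finset.sum_apply, Mf_div_eq_sum_indicator (zero_le_one.trans hx) ht.1.le]

theorem integral_Mf_div (hx : 1 ≤ x) : ∫ t in (1 : ℝ)..x, Mf (x / t) = x * mf x - Mf x := by
  have hx0 : 0 ≤ x := zero_le_one.trans hx
  rw [intervalIntegral.integral_congr fun t ht =>
      Mf_div_eq_sum_indicator hx0 (Set.uIcc_of_le hx ▸ ht).1,
    intervalIntegral.integral_finsetSum fun m _ =>
      IntegrableOn.intervalIntegrable_indicator_Icc
        (integrableOn_const measure_Icc_lt_top.ne),
    mf, Mf, mul_sum, ← sum_sub_distrib]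
  refine sum_congr rfl fun m hm => ?_
  have hm1 : (1 : ℝ) ≤ m := by exact_mod_cast (mem_Icc.1 hm).1
  have hmx : (m : ℝ) ≤ x := (Nat.le_floor_iff hx0).1 (mem_Icc.1 hm).2
  rw [intervalIntegral.integral_indicator_Icc _ le_rfl ((one_le_div₀ (by linarith)).2 hmx)
    (div_le_self hx0 hm1), intervalIntegral.integral_const, smul_eq_mul]
  field_simp

theorem Mf_div_mul_sum_eq_sum_indicator (hx : 0 ≤ x) {t : ℝ} (ht : 1 ≤ t) (htx : t ≤ x) :
    (Mf (x / t) : ℂ) * (∑ n ∈ Icc 1 ⌊t⌋₊, g (n / t)) / t =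
      ∑ m ∈ Icc 1 ⌊x⌋₊, ∑ n ∈ Icc 1 ⌊x⌋₊,
        (Set.Icc (n : ℝ) (x / m)).indicator (fun s => (μ m : ℂ) * (g (n / s) / s)) t := by
  rw [Mf_div_eq_sum_indicator hx ht, sum_Icc_floor_eq_sum_ite _ htx, Complex.ofReal_sum,
    sum_mul_sum, sum_div]
  refine sum_congr rfl fun m _ => ?_
  rw [sum_div]
  refine sum_congr rfl fun n _ => ?_
  simp only [Set.indicator_apply, Set.mem_Icc, ht, true_and]
  by_cases hnt : (n : ℝ) ≤ t <;> by_cases htm : t ≤ x / m <;> simp [hnt, htm, mul_div_assoc]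

theorem integrableOn_moebius_mul_comp_div_div_self (hg : IntegrableOn g (Set.Icc 0 1)) (m : ℕ)
    {n : ℕ} (hn : 1 ≤ n) :
    IntegrableOn (fun s => (μ m : ℂ) * (g (n / s) / s)) (Set.Icc (n : ℝ) (x / m)) := by
  have hn0 : (0 : ℝ) < n := by exact_mod_cast hn
  rcases le_or_gt (n : ℝ) (x / m) with hnx | hxn
  · have hu0 : 0 < n / (x / m) := div_pos hn0 (hn0.trans_le hnx)
    refine .const_mul ((integrableOn_Icc_comp_div_div_self_iff g hn0 hn0 hnx).2 ?_) _
    rw [div_self hn0.ne']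
    exact IntegrableOn.div_ofReal_Icc (hg.mono_set (Set.Icc_subset_Icc hu0.le le_rfl)) hu0
  · rw [Set.Icc_eq_empty hxn.not_ge]
    exact integrableOn_empty

theorem integral_moebius_mul_comp_div_div_self (hx : 1 ≤ x) {m n : ℕ} (hm : 1 ≤ m) (hn : 1 ≤ n) :
    ∫ t in (1 : ℝ)..x,
        (Set.Icc (n : ℝ) (x / m)).indicator (fun s => (μ m : ℂ) * (g (n / s) / s)) t =
      if m * n ≤ ⌊x⌋₊ then (μ m : ℂ) * ∫ u in ((m * n : ℕ) : ℝ) / x..1, g u / u else 0 := by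
  have hx0 : 0 < x := zero_lt_one.trans_le hx
  have hm0 : (0 : ℝ) < m := by exact_mod_cast hm
  have hn0 : (0 : ℝ) < n := by exact_mod_cast hn
  have hiff : m * n ≤ ⌊x⌋₊ ↔ (n : ℝ) ≤ x / m := by
    rw [Nat.le_floor_iff hx0.le, le_div_iff₀ hm0, Nat.cast_mul, mul_comm]
  split_ifs with hmn
  · have hnx := hiff.1 hmn
    rw [intervalIntegral.integral_indicator_Icc _ (by exact_mod_cast hn) hnx
        (div_le_self hx0.le (by exact_mod_cast hm)), intervalIntegral.integral_const_mul,
      intervalIntegral.integral_comp_div_div_self g hn0 hn0 hnx, div_self hn0.ne',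
      div_div_eq_mul_div, Nat.cast_mul, mul_comm (n : ℝ)]
  · rw [Set.Icc_eq_empty (hiff.not.1 hmn), Set.indicator_empty, intervalIntegral.integral_zero]

theorem intervalIntegrable_moebius_mul_comp_div_div_self (hg : IntegrableOn g (Set.Icc 0 1))
    (m : ℕ) {n : ℕ} (hn : 1 ≤ n) :
    IntervalIntegrable ((Set.Icc (n : ℝ) (x / m)).indicator fun s => (μ m : ℂ) * (g (n / s) / s))
      volume 1 x :=
  IntegrableOn.intervalIntegrable_indicator_Icc
    (integrableOn_moebius_mul_comp_div_div_self g hg m hn)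

theorem intervalIntegrable_Mf_div_mul_sum (hg : IntegrableOn g (Set.Icc 0 1)) (hx : 1 ≤ x) :
    IntervalIntegrable (fun t => (Mf (x / t) : ℂ) * (∑ n ∈ Icc 1 ⌊t⌋₊, g (n / t)) / t)
      volume 1 x := by
  have hsum := IntervalIntegrable.sum (Icc 1 ⌊x⌋₊) fun m _ => .sum (Icc 1 ⌊x⌋₊) fun n hn =>
    intervalIntegrable_moebius_mul_comp_div_div_self g (x := x) hg m (mem_Icc.1 hn).1
  refine hsum.congr fun t ht => ?_
  rw [Set.uIoc_of_le hx] at ht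
  simp only [Finset.sum_apply,
    Mf_div_mul_sum_eq_sum_indicator g (zero_le_one.trans hx) ht.1.le ht.2]

theorem integral_Mf_div_mul_sum (hg : IntegrableOn g (Set.Icc 0 1)) (hx : 1 ≤ x) :
    ∫ t in (1 : ℝ)..x, (Mf (x / t) : ℂ) * (∑ n ∈ Icc 1 ⌊t⌋₊, g (n / t)) / t =
      ∫ u in 1 / x..1, g u / u := by
  have hpiece (m : ℕ) (n : ℕ) (hn : n ∈ Icc 1 ⌊x⌋₊) :=
    intervalIntegrable_moebius_mul_comp_div_div_self g (x := x) hg m (mem_Icc.1 hn).1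
  rw [intervalIntegral.integral_congr fun t ht => Mf_div_mul_sum_eq_sum_indicator g
      (zero_le_one.trans hx) (Set.uIcc_of_le hx ▸ ht).1 (Set.uIcc_of_le hx ▸ ht).2,
    intervalIntegral.integral_finsetSum fun m _ => by
      simpa only [Finset.sum_fn] using IntervalIntegrable.sum _ (hpiece m),
    sum_congr rfl fun m _ => intervalIntegral.integral_finsetSum (hpiece m),
    sum_congr rfl fun m hm => sum_congr rfl fun n hn =>
      integral_moebius_mul_comp_div_div_self g hx (mem_Icc.1 hm).1 (mem_Icc.1 hn).1]
  exact (sum_sum_ite_moebius_mul_eq_apply_one (fun k : ℕ => ∫ u in (k : ℝ) / x..1, g u / u)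
    (Nat.le_floor (by simpa using hx))).trans (by simp)

end MoebiusIntegral

theorem stmt_6_general (g : ℝ → ℂ) (hg : IntegrableOn g (Set.Icc 0 1))
    (G : ℝ → ℂ) (hG : ∀ t : ℝ, G t = 1 - (1 / (t : ℂ)) * ∑ n ∈ Finset.Icc 1 ⌊t⌋₊, g (n / t))
    (x : ℝ) (hx : 1 ≤ x) :
    (mf x - Mf x / x : ℂ)
      = (∫ t in (1:ℝ)..x, (Mf (x / t) * t / x : ℝ) * G t / t)
        + (1 / (x : ℂ)) * ∫ y in (1/x:ℝ)..1, g y / y := by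
  have hx0 : (x : ℂ) ≠ 0 := by exact_mod_cast (zero_lt_one.trans_le hx).ne'
  have hMf : IntervalIntegrable (fun t => (Mf (x / t) : ℂ)) volume 1 x :=
    ⟨Integrable.ofReal (intervalIntegrable_Mf_div hx).1,
      Integrable.ofReal (intervalIntegrable_Mf_div hx).2⟩
  have hintegrand : Set.EqOn (fun t => ((Mf (x / t) * t / x : ℝ) : ℂ) * G t / t)
      (fun t => 1 / (x : ℂ) *
        ((Mf (x / t) : ℂ) - (Mf (x / t) : ℂ) * (∑ n ∈ Icc 1 ⌊t⌋₊, g (n / t)) / t))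
      (Set.uIcc 1 x) := fun t ht => by
    have ht0 : (t : ℂ) ≠ 0 := by
      exact_mod_cast (zero_lt_one.trans_le (Set.uIcc_of_le hx ▸ ht).1).ne'
    simp only [hG]
    push_cast
    field_simp
  rw [intervalIntegral.integral_congr hintegrand, intervalIntegral.integral_const_mul,
    intervalIntegral.integral_sub hMf (intervalIntegrable_Mf_div_mul_sum g hg hx),
    intervalIntegral.integral_ofReal, integral_Mf_div hx, integral_Mf_div_mul_sum g hg hx]
  push_cast
  field_simp
  ring

theorem stmt_6 (g : ℝ → ℂ) (hg : IntegrableOn g (Set.Icc 0 1))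
    (hg1 : ∫ y in (0:ℝ)..1, g y = 1)
    (G : ℝ → ℂ) (hG : ∀ t : ℝ, G t = 1 - (1 / (t : ℂ)) * ∑ n ∈ Finset.Icc 1 ⌊t⌋₊, g (n / t))
    (x : ℝ) (hx : 1 ≤ x) :
    (mf x - Mf x / x : ℂ)
      = (∫ t in (1:ℝ)..x, (Mf (x / t) * t / x : ℝ) * G t / t)
        + (1 / (x : ℂ)) * ∫ y in (1/x:ℝ)..1, g y / y :=
  stmt_6_general g hg G hG x hx
end
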